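/- Let Φ ∈ S(ℝⁿ) with supp(Φ) ⊂ B_{1/4}(0). Then there is C > 0 such that sup_{t>0}|(Φ_t^d ∗ b)(j)| ≤ C(Mb)(j) for every j ∈ ℤⁿ and every bounded sequence b on ℤⁿ, where M is the centered discrete Hardy–Littlewood maximal operator. -/

import Mathlib

open scoped BigOperators ENNReal

noncomputable section

/-- Euclidean norm of an integer vector in `ℤⁿ`. -/
def znorm {n : ℕ} (j : Fin n → ℤ) : ℝ := Real.sqrt (∑ l, ((j l : ℝ)) ^ 2)

/-- `ℓ^∞` norm of an integer vector, as a natural number. -/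
def zinf {n : ℕ} (j : Fin n → ℤ) : ℕ := Finset.univ.sup fun l => (j l).natAbs

/-- The discrete cube centered at `k0` with "radius" `m` (side length `2m+1`),
i.e. `{i : |i - k0|_∞ ≤ m}`. -/
def dcube {n : ℕ} (k0 : Fin n → ℤ) (m : ℕ) : Finset (Fin n → ℤ) :=
  Finset.Icc (fun l => k0 l - m) (fun l => k0 l + m)

/-- The discrete Riesz potential `(I_α b)(j) = ∑_{i ≠ j} b(i) |i-j|^{α-n}`. -/
def rieszPot {n : ℕ} (α : ℝ) (b : (Fin n → ℤ) → ℝ) (j : Fin n → ℤ) : ℝ :=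
  ∑' i : {i : Fin n → ℤ // i ≠ j}, b i.1 * znorm (i.1 - j) ^ (α - n)

/-- Embedding of `ℤⁿ` into Euclidean space `ℝⁿ`. -/
def toE {n : ℕ} (j : Fin n → ℤ) : EuclideanSpace ℝ (Fin n) := WithLp.toLp 2 (fun l => (j l : ℝ))

/-- The discretized dilation `Φ_t^d(j) = t^{-n} Φ(j/t)` for `j ≠ 0`, and `Φ_t^d(0) = 0`. -/
def phid {n : ℕ} (Φ : SchwartzMap (EuclideanSpace ℝ (Fin n)) ℝ) (t : ℝ) (j : Fin n → ℤ) : ℝ :=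
  if j = 0 then 0 else t ^ (-(n : ℝ)) * Φ (t⁻¹ • toE j)

/-- Discrete convolution `(b ∗ c)(j) = ∑_i b(i) c(j-i)`. -/
def dconv {n : ℕ} (b c : (Fin n → ℤ) → ℝ) (j : Fin n → ℤ) : ℝ :=
  ∑' i : Fin n → ℤ, b i * c (j - i)

/-- The maximal function `sup_{t>0} |(Φ_t^d ∗ b)(j)|`, valued in `ℝ≥0∞`. -/
def maxFn {n : ℕ} (Φ : SchwartzMap (EuclideanSpace ℝ (Fin n)) ℝ) (b : (Fin n → ℤ) → ℝ)
    (j : Fin n → ℤ) : ℝ≥0∞ :=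
  ⨆ (t : ℝ) (_ : 0 < t), ENNReal.ofReal |dconv (phid Φ t) b j|

/-- The `ℓ^p` quasinorm (`0 < p < ∞`) of a real sequence on `ℤⁿ`, valued in `ℝ≥0∞`. -/
def elp {n : ℕ} (p : ℝ) (f : (Fin n → ℤ) → ℝ) : ℝ≥0∞ :=
  (∑' j : Fin n → ℤ, ENNReal.ofReal |f j| ^ p) ^ (1 / p)

/-- The `ℓ^p` quasinorm of an `ℝ≥0∞`-valued sequence on `ℤⁿ`. -/
def elpE {n : ℕ} (p : ℝ) (f : (Fin n → ℤ) → ℝ≥0∞) : ℝ≥0∞ :=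
  (∑' j : Fin n → ℤ, f j ^ p) ^ (1 / p)

/-- The discrete Hardy space quasinorm `‖b‖_{H^p} = ‖b‖_{ℓ^p} + ‖sup_{t>0}|Φ_t^d ∗ b|‖_{ℓ^p}`. -/
def hpNorm {n : ℕ} (Φ : SchwartzMap (EuclideanSpace ℝ (Fin n)) ℝ) (p : ℝ)
    (b : (Fin n → ℤ) → ℝ) : ℝ≥0∞ :=
  elp p b + elpE p (maxFn Φ b)

/-- A `(p, ∞, N)`-atom supported in the discrete cube `dcube k0 m`. -/
def IsDiscreteAtom {n : ℕ} (p : ℝ) (N : ℕ) (k0 : Fin n → ℤ) (m : ℕ)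
    (a : (Fin n → ℤ) → ℝ) : Prop :=
  (∀ j, j ∉ dcube k0 m → a j = 0) ∧
  (∀ j, |a j| ≤ ((dcube k0 m).card : ℝ) ^ (-(1 / p))) ∧
  (∀ β : Fin n → ℕ, (∑ l, β l) ≤ N →
    ∑ j ∈ dcube k0 m, (∏ l, ((j l : ℝ)) ^ β l) * a j = 0)

/-- The centered discrete fractional maximal operator
`(M_α b)(j) = sup_m (#Q_{j,m})^{α/n - 1} ∑_{i ∈ Q_{j,m}} |b(i)|`. -/
def fracMax {n : ℕ} (α : ℝ) (b : (Fin n → ℤ) → ℝ) (j : Fin n → ℤ) : ℝ≥0∞ :=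
  ⨆ m : ℕ, ENNReal.ofReal
    ((((dcube j m).card : ℝ) ^ (α / n - 1)) * ∑ i ∈ dcube j m, |b i|)

/-- The Taylor polynomial of degree `N - 1` of `f` centered at `c`, evaluated at `x`. -/
def taylorPoly {n : ℕ} (f : EuclideanSpace ℝ (Fin n) → ℝ) (c x : EuclideanSpace ℝ (Fin n))
    (N : ℕ) : ℝ :=
  ∑ r ∈ Finset.range N, (1 / r.factorial : ℝ) * iteratedFDeriv ℝ r f c (fun _ => x - c)

/-!
Since `Φ` vanishes outside `B_{1/4}(0)`, the kernel `Φ_t^d` is supported in the cube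
`|i|_∞ ≤ ⌊t/4⌋ =: m` and is bounded by `t^{-n} ‖Φ‖_∞`. Nonzero lattice points have norm `≥ 1`,
so `Φ_t^d = 0` for `t ≤ 4`, while for `t > 4` the cube has side `2m + 1 ≤ t`. Hence
`|(Φ_t^d ∗ b)(j)| ≤ ‖Φ‖_∞ (2m+1)^{-n} ∑_{|i-j|_∞ ≤ m} |b(i)| ≤ ‖Φ‖_∞ (Mb)(j)`.
-/

lemma abs_toE_apply_le_norm {n : ℕ} (i : Fin n → ℤ) (l : Fin n) :
    |(i l : ℝ)| ≤ ‖toE i‖ := by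
  simpa [toE] using PiLp.norm_apply_le (toE i) l

lemma one_le_norm_toE {n : ℕ} {i : Fin n → ℤ} (hi : i ≠ 0) : 1 ≤ ‖toE i‖ := by
  obtain ⟨l, hl⟩ := Function.ne_iff.mp hi
  calc (1 : ℝ) ≤ |(i l : ℝ)| := by exact_mod_cast Int.one_le_abs hl
    _ ≤ ‖toE i‖ := abs_toE_apply_le_norm i l

lemma mem_dcube {n : ℕ} {k j : Fin n → ℤ} {m : ℕ} :
    j ∈ dcube k m ↔ ∀ l, (j l - k l).natAbs ≤ m := by
  simp only [dcube, Finset.mem_Icc, Pi.le_def, ← forall_and]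
  exact forall_congr' fun l => by omega

lemma card_dcube {n : ℕ} (k : Fin n → ℤ) (m : ℕ) : (dcube k m).card = (2 * m + 1) ^ n := by
  rw [dcube, Pi.card_Icc, Finset.prod_eq_pow_card (b := 2 * m + 1) fun l _ => by rw [Int.card_Icc]; omega,
    Finset.card_univ, Fintype.card_fin]

lemma sum_dcube_zero_sub {n : ℕ} (f : (Fin n → ℤ) → ℝ) (j : Fin n → ℤ) (m : ℕ) :
    ∑ i ∈ dcube 0 m, f (j - i) = ∑ k ∈ dcube j m, f k := by
  refine Finset.sum_nbij' (j - ·) (j - ·) (fun i hi => ?_) (fun k hk => ?_)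
    (fun i _ => sub_sub_cancel j i) (fun k _ => sub_sub_cancel j k) (fun _ _ => rfl)
  · simp only [mem_dcube, Pi.sub_apply, Pi.zero_apply] at hi ⊢
    exact fun l => by have := hi l; omega
  · simp only [mem_dcube, Pi.sub_apply, Pi.zero_apply] at hk ⊢
    exact fun l => by have := hk l; omega

lemma abs_dconv_le_of_support_subset_dcube {n : ℕ} {c : (Fin n → ℤ) → ℝ} {m : ℕ} {K : ℝ}
    (hsupp : Function.support c ⊆ ↑(dcube (0 : Fin n → ℤ) m)) (hc : ∀ i, |c i| ≤ K) (b : (Fin n → ℤ) → ℝ)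
    (j : Fin n → ℤ) : |dconv c b j| ≤ K * ∑ k ∈ dcube j m, |b k| := by
  have hvanish : ∀ i ∉ dcube 0 m, c i * b (j - i) = 0 := fun i hi => by
    rw [Function.notMem_support.mp fun h => hi (hsupp h), zero_mul]
  calc |dconv c b j| = |∑ i ∈ dcube 0 m, c i * b (j - i)| := by
        rw [dconv, tsum_eq_sum hvanish]
    _ ≤ ∑ i ∈ dcube 0 m, K * |b (j - i)| := by
        refine (Finset.abs_sum_le_sum_abs _ _).trans (Finset.sum_le_sum fun i _ => ?_)
        rw [abs_mul]
        exact mul_le_mul_of_nonneg_right (hc i) (abs_nonneg _)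
    _ = K * ∑ k ∈ dcube j m, |b k| := by
        rw [← Finset.mul_sum, sum_dcube_zero_sub (fun k => |b k|)]

section Kernel

variable {n : ℕ} {Φ : SchwartzMap (EuclideanSpace ℝ (Fin n)) ℝ} {t : ℝ}

lemma norm_toE_lt_of_phid_ne_zero {R : ℝ} (hΦ : Function.support (⇑Φ) ⊆ Metric.ball 0 R)
    (ht : 0 < t) {i : Fin n → ℤ} (hi : phid Φ t i ≠ 0) : i ≠ 0 ∧ ‖toE i‖ < R * t := by
  have hi0 : i ≠ 0 := fun h => hi (if_pos h)
  have hΦi : Φ (t⁻¹ • toE i) ≠ 0 := fun h => hi (by rw [phid, if_neg hi0, h, mul_zero])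
  have hball := hΦ hΦi
  rw [mem_ball_zero_iff, norm_smul, Real.norm_of_nonneg (inv_nonneg.mpr ht.le),
    inv_mul_lt_iff₀ ht, mul_comm] at hball
  exact ⟨hi0, hball⟩

lemma support_phid_subset_dcube {R : ℝ} (hΦ : Function.support (⇑Φ) ⊆ Metric.ball 0 R)
    (ht : 0 < t) : Function.support (phid Φ t) ⊆ ↑(dcube (0 : Fin n → ℤ) ⌊R * t⌋₊) := fun i hi => by
  have hlt := (norm_toE_lt_of_phid_ne_zero hΦ ht hi).2
  refine mem_dcube.mpr fun l => Nat.le_floor ?_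
  rw [Pi.zero_apply, sub_zero, Nat.cast_natAbs, Int.cast_abs]
  exact (abs_toE_apply_le_norm i l).trans hlt.le

lemma phid_eq_zero_of_le {R : ℝ} (hΦ : Function.support (⇑Φ) ⊆ Metric.ball 0 R)
    (ht : 0 < t) (htR : R * t ≤ 1) (i : Fin n → ℤ) : phid Φ t i = 0 := by
  by_contra hi
  obtain ⟨hi0, hlt⟩ := norm_toE_lt_of_phid_ne_zero hΦ ht hi
  linarith [one_le_norm_toE hi0]

lemma abs_phid_le {A : ℝ} (hA : 0 ≤ A) (hΦA : ∀ x, |Φ x| ≤ A) (ht : 0 < t)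
    (i : Fin n → ℤ) : |phid Φ t i| ≤ (t ^ n)⁻¹ * A := by
  have htn : 0 < (t ^ n)⁻¹ := by positivity
  unfold phid
  split_ifs
  · rw [abs_zero]
    positivity
  · rw [Real.rpow_neg ht.le, Real.rpow_natCast, abs_mul, abs_of_pos htn]
    exact mul_le_mul_of_nonneg_left (hΦA _) htn.le

end Kernel

lemma ofReal_average_le_fracMax_zero {n : ℕ} (b : (Fin n → ℤ) → ℝ) (j : Fin n → ℤ) (m : ℕ) :
    ENNReal.ofReal (((dcube j m).card : ℝ)⁻¹ * ∑ i ∈ dcube j m, |b i|) ≤ fracMax 0 b j := by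
  have hexp : ((dcube j m).card : ℝ) ^ ((0 : ℝ) / n - 1) = ((dcube j m).card : ℝ)⁻¹ := by
    rw [zero_div, zero_sub, Real.rpow_neg_one]
  rw [← hexp]
  exact le_iSup (fun m => ENNReal.ofReal
    (((dcube j m).card : ℝ) ^ ((0 : ℝ) / n - 1) * ∑ i ∈ dcube j m, |b i|)) m

lemma abs_dconv_phid_le {n : ℕ} {Φ : SchwartzMap (EuclideanSpace ℝ (Fin n)) ℝ}
    (hΦ : Function.support (⇑Φ) ⊆ Metric.ball 0 (1 / 4)) {A : ℝ} (hA : 0 ≤ A)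
    (hΦA : ∀ x, |Φ x| ≤ A) {t : ℝ} (ht : 0 < t) (b : (Fin n → ℤ) → ℝ) (j : Fin n → ℤ) :
    |dconv (phid Φ t) b j| ≤
      A * (((dcube j ⌊1 / 4 * t⌋₊).card : ℝ)⁻¹ * ∑ k ∈ dcube j ⌊1 / 4 * t⌋₊, |b k|) := by
  set m := ⌊1 / 4 * t⌋₊
  rcases le_or_gt t 4 with ht4 | ht4
  · have hzero : phid Φ t = 0 := funext (phid_eq_zero_of_le hΦ ht (by linarith))
    simp only [hzero, dconv, Pi.zero_apply, zero_mul, tsum_zero, abs_zero]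
    positivity
  have hside : ((2 * m + 1 : ℕ) : ℝ) ≤ t := by
    have := Nat.floor_le (a := 1 / 4 * t) (by positivity)
    push_cast
    linarith
  have hcard : (t ^ n)⁻¹ ≤ ((dcube j m).card : ℝ)⁻¹ := by
    rw [card_dcube, Nat.cast_pow]
    exact inv_anti₀ (by positivity) (pow_le_pow_left₀ (by positivity) hside n)
  calc |dconv (phid Φ t) b j| ≤ (t ^ n)⁻¹ * A * ∑ k ∈ dcube j m, |b k| :=
        abs_dconv_le_of_support_subset_dcube (support_phid_subset_dcube hΦ ht)
          (abs_phid_le hA hΦA ht) b j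
    _ ≤ ((dcube j m).card : ℝ)⁻¹ * A * ∑ k ∈ dcube j m, |b k| := by gcongr
    _ = A * (((dcube j m).card : ℝ)⁻¹ * ∑ k ∈ dcube j m, |b k|) := by ring

/-- pointwise bound `sup_{t>0} |(Φ_t^d ∗ b)(j)| ≤ C (Mb)(j)` for bounded
sequences `b`, where `M = M_0` is the centered discrete Hardy–Littlewood maximal operator. -/
theorem stmt13 (n : ℕ) (Φ : SchwartzMap (EuclideanSpace ℝ (Fin n)) ℝ)
    (hΦ : Function.support (⇑Φ) ⊆ Metric.ball 0 (1 / 4)) :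
    ∃ C > (0 : ℝ), ∀ b : (Fin n → ℤ) → ℝ, (∃ M, ∀ i, |b i| ≤ M) →
      ∀ j : Fin n → ℤ, maxFn Φ b j ≤ ENNReal.ofReal C * fracMax 0 b j := by
  obtain ⟨A, hA, hΦA⟩ := Φ.decay 0 0
  simp only [pow_zero, one_mul, norm_iteratedFDeriv_zero, Real.norm_eq_abs] at hΦA
  refine ⟨A, hA, fun b _ j => iSup₂_le fun t ht => ?_⟩
  calc ENNReal.ofReal |dconv (phid Φ t) b j|
      ≤ ENNReal.ofReal (A * (((dcube j ⌊1 / 4 * t⌋₊).card : ℝ)⁻¹ *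
          ∑ k ∈ dcube j ⌊1 / 4 * t⌋₊, |b k|)) :=
        ENNReal.ofReal_le_ofReal (abs_dconv_phid_le hΦ hA.le hΦA ht b j)
    _ = ENNReal.ofReal A * ENNReal.ofReal (((dcube j ⌊1 / 4 * t⌋₊).card : ℝ)⁻¹ *
          ∑ k ∈ dcube j ⌊1 / 4 * t⌋₊, |b k|) := ENNReal.ofReal_mul hA.le
    _ ≤ ENNReal.ofReal A * fracMax 0 b j := by
        gcongr
        exact ofReal_average_le_fracMax_zero b j _
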